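/- Let p be a polynomial with complex coefficients and let 0 ≤ k ≤ n−1. Then I_0(x^k Q_n[p](x) e^{−x³}) = (k!/3^{k+1}) Q_{n−k−1}[p](0), and I_1(x^k Q_n[p](x) e^{−x³}) = I_2(x^k Q_n[p](x) e^{−x³}) = −(k!/3^{k+1}) Q_{n−k−1}[p](0). -/

import Mathlib

/-!
The polynomial `Qₙ = Q_n[p]` satisfies `Q₀ = p`, `Qₙ₊₁ = X² Qₙ − Qₙ'/3` (this is `QPoly`), i.e.
`(e^{-t³} Qₙ(t))' = −3 e^{-t³} Qₙ₊₁(t)`. Integrating `tᵏ e^{-t³} Qₙ(t)` by parts `k + 1` times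
over `(0, ∞)` therefore leaves only the boundary term at `0`, which is `k!/3^{k+1} Q_{n-k-1}(0)`.
For `μ³ = 1` the substitution `x = μ t` leaves `e^{-x³}` unchanged, and
`Qₙ[p(μ ·)](x) = μⁿ Qₙ[p](μ x)`, so the integral along the ray `μ·[0, ∞)` is `μ²` times the
one along `[0, ∞)`; with the factor `−μ` in the definitions of `I₁`, `I₂` this gives `−1`.
-/

/-- The primitive third root of unity `ω = exp(2πi/3)`. -/
noncomputable def ω : ℂ := Complex.exp (2 * Real.pi * Complex.I / 3)

/-- Integral over the ray `Γ₀ = [0,∞)`. -/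
noncomputable def I0 (f : ℂ → ℂ) : ℂ := ∫ t in Set.Ioi (0 : ℝ), f t

/-- Integral over the ray `Γ₁ = ω·[0,∞)`, oriented towards the origin. -/
noncomputable def I1 (f : ℂ → ℂ) : ℂ := -ω * ∫ t in Set.Ioi (0 : ℝ), f (ω * t)

/-- Integral over the ray `Γ₂ = ω²·[0,∞)`, oriented towards the origin. -/
noncomputable def I2 (f : ℂ → ℂ) : ℂ := -ω ^ 2 * ∫ t in Set.Ioi (0 : ℝ), f (ω ^ 2 * t)

/-- `Q n p x = (−1)ⁿ 3⁻ⁿ e^{x³} (d/dx)ⁿ (e^{−x³} p(x))`. -/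
noncomputable def Q (n : ℕ) (p : Polynomial ℂ) : ℂ → ℂ := fun x =>
  (-1) ^ n / 3 ^ n * Complex.exp (x ^ 3) *
    iteratedDeriv n (fun z => Complex.exp (-z ^ 3) * p.eval z) x

open MeasureTheory Polynomial Filter Set Topology
open scoped Complex Real

noncomputable def QPoly : ℕ → ℂ[X] → ℂ[X]
  | 0, p => p
  | n + 1, p => X ^ 2 * QPoly n p - C (1 / 3) * derivative (QPoly n p)

lemma hasDerivAt_exp_neg_cube_mul_eval (r : ℂ[X]) (x : ℂ) :
    HasDerivAt (fun z => cexp (-z ^ 3) * r.eval z)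
      (-3 * (cexp (-x ^ 3) * (X ^ 2 * r - C (1 / 3) * derivative r).eval x)) x := by
  have hexp : HasDerivAt (fun z : ℂ => cexp (-z ^ 3))
      (cexp (-x ^ 3) * -(3 * x ^ 2)) x := by
    simpa using ((hasDerivAt_pow 3 x).fun_neg).cexp
  refine (hexp.fun_mul (r.hasDerivAt x)).congr_deriv ?_
  simp only [eval_sub, eval_mul, eval_pow, eval_X, eval_C]
  ring

lemma iteratedDeriv_exp_neg_cube_mul_eval (p : ℂ[X]) (n : ℕ) (x : ℂ) :
    iteratedDeriv n (fun z => cexp (-z ^ 3) * p.eval z) x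
      = (-3) ^ n * (cexp (-x ^ 3) * (QPoly n p).eval x) := by
  induction n generalizing x with
  | zero => simp [QPoly]
  | succ n ih =>
    rw [iteratedDeriv_succ, funext ih, deriv_const_mul_field,
      (hasDerivAt_exp_neg_cube_mul_eval _ x).deriv, QPoly]
    ring

lemma Q_eq_eval_QPoly (n : ℕ) (p : ℂ[X]) (x : ℂ) : Q n p x = (QPoly n p).eval x := by
  have hexp : cexp (x ^ 3) * cexp (-x ^ 3) = 1 := by
    rw [← Complex.exp_add, add_neg_cancel, Complex.exp_zero]
  have hsign : ((-1) ^ n / 3 ^ n : ℂ) * (-3) ^ n = 1 := by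
    rw [← div_pow, ← mul_pow]
    norm_num
  rw [Q, iteratedDeriv_exp_neg_cube_mul_eval]
  linear_combination
    (cexp (x ^ 3) * cexp (-x ^ 3) * (QPoly n p).eval x) * hsign
      + (QPoly n p).eval x * hexp

lemma QPoly_comp_C_mul_X {μ : ℂ} (hμ : μ ^ 3 = 1) (p : ℂ[X]) (n : ℕ) :
    QPoly n (p.comp (C μ * X)) = C (μ ^ n) * (QPoly n p).comp (C μ * X) := by
  induction n with
  | zero => simp [QPoly]
  | succ n ih =>
    have hC : (C μ) ^ 3 = 1 := by rw [← C_pow, hμ, C_1]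
    simp only [QPoly, ih, sub_comp, mul_comp, pow_comp, X_comp, C_comp, derivative_mul,
      derivative_C, derivative_comp, derivative_X, zero_mul, zero_add, mul_one]
    simp only [C_pow]
    linear_combination (-(C μ ^ n * X ^ 2 * (QPoly n p).comp (C μ * X))) * hC

lemma tendsto_pow_mul_exp_neg_cube_atTop (i : ℕ) :
    Tendsto (fun t : ℝ => t ^ i * rexp (-t ^ 3)) atTop (𝓝 0) := by
  refine squeeze_zero' ?_ ?_ (Real.tendsto_pow_mul_exp_neg_atTop_nhds_zero i)
  · filter_upwards [eventually_ge_atTop 0] with t ht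
    positivity
  · filter_upwards [eventually_ge_atTop 1] with t ht
    gcongr
    exact le_self_pow₀ ht (by norm_num)

lemma ofReal_pow_mul_exp_neg_cube (i : ℕ) (t : ℝ) :
    (t : ℂ) ^ i * cexp (-(t : ℂ) ^ 3) = ((t ^ i * rexp (-t ^ 3) : ℝ) : ℂ) := by
  push_cast
  ring

lemma integrableOn_pow_mul_exp_neg_cube (i : ℕ) :
    IntegrableOn (fun t : ℝ => t ^ i * rexp (-t ^ 3)) (Ioi 0) := by
  simpa [Real.rpow_natCast] using
    integrableOn_rpow_mul_exp_neg_rpow (s := i) (p := 3) (neg_one_lt_zero.trans_le i.cast_nonneg)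
      (by norm_num)

lemma pow_mul_exp_neg_cube_mul_eval (j : ℕ) (r : ℂ[X]) (t : ℝ) :
    (t : ℂ) ^ j * (cexp (-(t : ℂ) ^ 3) * r.eval (t : ℂ))
      = ∑ i ∈ Finset.range (r.natDegree + 1),
          r.coeff i * ((t : ℂ) ^ (i + j) * cexp (-(t : ℂ) ^ 3)) := by
  rw [eval_eq_sum_range, Finset.mul_sum, Finset.mul_sum]
  refine Finset.sum_congr rfl fun i _ => ?_
  ring

lemma tendsto_pow_mul_exp_neg_cube_mul_eval (j : ℕ) (r : ℂ[X]) :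
    Tendsto (fun t : ℝ => (t : ℂ) ^ j * (cexp (-(t : ℂ) ^ 3) * r.eval (t : ℂ)))
      atTop (𝓝 0) := by
  simp only [pow_mul_exp_neg_cube_mul_eval, ofReal_pow_mul_exp_neg_cube]
  simpa using tendsto_finsetSum _ fun i _ =>
    ((Complex.continuous_ofReal.tendsto 0).comp
      (tendsto_pow_mul_exp_neg_cube_atTop (i + j))).const_mul (r.coeff i)

lemma integrableOn_pow_mul_exp_neg_cube_mul_eval (j : ℕ) (r : ℂ[X]) :
    IntegrableOn (fun t : ℝ => (t : ℂ) ^ j * (cexp (-(t : ℂ) ^ 3) * r.eval (t : ℂ)))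
      (Ioi 0) := by
  simp only [pow_mul_exp_neg_cube_mul_eval, ofReal_pow_mul_exp_neg_cube]
  exact integrable_finsetSum _ fun i _ =>
    (integrableOn_pow_mul_exp_neg_cube (i + j)).ofReal.const_mul _

lemma integral_Ioi_pow_succ_mul_deriv {g g' : ℝ → ℂ} (k : ℕ)
    (hg : ∀ t, HasDerivAt g (g' t) t)
    (hg' : IntegrableOn (fun t : ℝ => (t : ℂ) ^ (k + 1) * g' t) (Ioi 0))
    (hgk : IntegrableOn (fun t : ℝ => (t : ℂ) ^ k * g t) (Ioi 0))
    (hlim : Tendsto (fun t : ℝ => (t : ℂ) ^ (k + 1) * g t) atTop (𝓝 0)) :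
    ∫ t in Ioi (0 : ℝ), (t : ℂ) ^ (k + 1) * g' t
      = -((k + 1) * ∫ t in Ioi (0 : ℝ), (t : ℂ) ^ k * g t) := by
  have hpow (t : ℝ) :
      HasDerivAt (fun s : ℝ => (s : ℂ) ^ (k + 1)) ((k + 1) * (t : ℂ) ^ k) t := by
    simpa using (hasDerivAt_pow (k + 1) (t : ℂ)).comp_ofReal
  have hzero : Tendsto (fun t : ℝ => (t : ℂ) ^ (k + 1) * g t) (𝓝[>] 0) (𝓝 0) := by
    have hcont : Continuous fun t : ℝ => (t : ℂ) ^ (k + 1) * g t :=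
      (Complex.continuous_ofReal.pow _).mul
        (continuous_iff_continuousAt.2 fun t => (hg t).continuousAt)
    simpa using (hcont.tendsto 0).mono_left nhdsWithin_le_nhds
  rw [integral_Ioi_mul_deriv_eq_deriv_mul (fun t _ => hpow t) (fun t _ => hg t) hg' _ hzero hlim,
    ← integral_const_mul]
  · simp only [zero_sub, sub_zero, mul_assoc]
  · simp only [Pi.mul_def, mul_assoc]
    exact hgk.const_mul _

lemma integral_pow_mul_exp_neg_cube_mul_QPoly (q : ℂ[X]) (m k : ℕ) :
    ∫ t in Ioi (0 : ℝ), (t : ℂ) ^ k * (cexp (-(t : ℂ) ^ 3) * (QPoly (m + k + 1) q).eval (t : ℂ))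
      = k.factorial / 3 ^ (k + 1) * (QPoly m q).eval 0 := by
  have hderiv (j : ℕ) (t : ℝ) :
      HasDerivAt (fun s : ℝ => cexp (-(s : ℂ) ^ 3) * (QPoly j q).eval (s : ℂ))
        (-3 * (cexp (-(t : ℂ) ^ 3) * (QPoly (j + 1) q).eval (t : ℂ))) t :=
    (hasDerivAt_exp_neg_cube_mul_eval _ t).comp_ofReal
  induction k with
  | zero =>
    have hint := (integrableOn_pow_mul_exp_neg_cube_mul_eval 0 (QPoly (m + 1) q)).const_mul (-3)
    have hlim := tendsto_pow_mul_exp_neg_cube_mul_eval 0 (QPoly m q)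
    simp only [pow_zero, one_mul] at hint hlim ⊢
    have := integral_Ioi_of_hasDerivAt_of_tendsto' (fun t _ => hderiv m t) hint hlim
    rw [integral_const_mul] at this
    simp only [Complex.ofReal_zero, zero_pow three_ne_zero, neg_zero, Complex.exp_zero,
      zero_sub] at this
    linear_combination -this / 3
  | succ k ih =>
    have := integral_Ioi_pow_succ_mul_deriv k (hderiv (m + k + 1))
      (by
        simp only [mul_left_comm _ (-3 : ℂ)]
        exact (integrableOn_pow_mul_exp_neg_cube_mul_eval _ _).const_mul (-3))
      (integrableOn_pow_mul_exp_neg_cube_mul_eval _ _)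
      (tendsto_pow_mul_exp_neg_cube_mul_eval _ _)
    simp only [mul_left_comm _ (-3 : ℂ), integral_const_mul, ih] at this
    push_cast [Nat.factorial_succ]
    linear_combination -this / 3

lemma integral_ray_pow_mul_Q_mul_exp_neg_cube {μ : ℂ} (hμ : μ ^ 3 = 1) (p : ℂ[X]) {n k : ℕ}
    (hk : k < n) :
    ∫ t in Ioi (0 : ℝ), (fun x => x ^ k * Q n p x * cexp (-x ^ 3)) (μ * t)
      = μ ^ 2 * ((k.factorial : ℂ) / 3 ^ (k + 1) * Q (n - k - 1) p 0) := by
  obtain ⟨m, rfl⟩ : ∃ m, n = m + k + 1 := ⟨n - k - 1, by omega⟩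
  rw [show m + k + 1 - k - 1 = m by omega]
  set pμ := p.comp (C μ * X)
  have hrot (j : ℕ) (x : ℂ) : (QPoly j pμ).eval x = μ ^ j * (QPoly j p).eval (μ * x) := by
    simp [pμ, QPoly_comp_C_mul_X hμ]
  have hintegrand (t : ℝ) :
      μ ^ (m + k + 1) * ((μ * t) ^ k * Q (m + k + 1) p (μ * t) * cexp (-(μ * t) ^ 3))
        = μ ^ k * ((t : ℂ) ^ k * (cexp (-(t : ℂ) ^ 3) * (QPoly (m + k + 1) pμ).eval (t : ℂ))) := by
    rw [Q_eq_eval_QPoly, hrot, mul_pow μ _ 3, hμ, one_mul]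
    ring
  set L := ∫ t in Ioi (0 : ℝ), (fun x => x ^ k * Q (m + k + 1) p x * cexp (-x ^ 3)) (μ * t)
  have hscaled : μ ^ (m + k) * (μ * L)
      = μ ^ (m + k) * ((k.factorial : ℂ) / 3 ^ (k + 1) * Q m p 0) := by
    rw [← mul_assoc, ← pow_succ, ← integral_const_mul]
    simp only [hintegrand]
    rw [integral_const_mul, integral_pow_mul_exp_neg_cube_mul_QPoly, hrot, Q_eq_eval_QPoly,
      mul_zero]
    ring
  have hμ0 : μ ≠ 0 := by rintro rfl; norm_num at hμ
  calc L = μ ^ 3 * L := by rw [hμ, one_mul]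
    _ = μ ^ 2 * (μ * L) := by ring
    _ = _ := by rw [mul_left_cancel₀ (pow_ne_zero _ hμ0) hscaled]

lemma ω_pow_three : ω ^ 3 = 1 := by
  simpa only [ω, Nat.cast_ofNat] using (Complex.isPrimitiveRoot_exp 3 (by norm_num)).pow_eq_one

/-- For `0 ≤ k ≤ n−1`,
`I₀(xᵏ Qₙ[p](x) e^{−x³}) = (k!/3^{k+1}) Q_{n−k−1}[p](0)` and
`I₁(xᵏ Qₙ[p](x) e^{−x³}) = I₂(xᵏ Qₙ[p](x) e^{−x³}) = −(k!/3^{k+1}) Q_{n−k−1}[p](0)`. -/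
theorem stmt3 (p : Polynomial ℂ) (n k : ℕ) (hk : k < n) :
    I0 (fun x => x ^ k * Q n p x * Complex.exp (-x ^ 3)) =
      (Nat.factorial k : ℂ) / 3 ^ (k + 1) * Q (n - k - 1) p 0 ∧
    I1 (fun x => x ^ k * Q n p x * Complex.exp (-x ^ 3)) =
      -((Nat.factorial k : ℂ) / 3 ^ (k + 1) * Q (n - k - 1) p 0) ∧
    I2 (fun x => x ^ k * Q n p x * Complex.exp (-x ^ 3)) =
      -((Nat.factorial k : ℂ) / 3 ^ (k + 1) * Q (n - k - 1) p 0) := by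
  have hω6 : (ω ^ 2) ^ 3 = 1 := by rw [← pow_mul, pow_mul', ω_pow_three, one_pow]
  have h0 := integral_ray_pow_mul_Q_mul_exp_neg_cube (one_pow 3) p hk
  have h1 := integral_ray_pow_mul_Q_mul_exp_neg_cube ω_pow_three p hk
  have h2 := integral_ray_pow_mul_Q_mul_exp_neg_cube hω6 p hk
  set V := (Nat.factorial k : ℂ) / 3 ^ (k + 1) * Q (n - k - 1) p 0
  refine ⟨?_, ?_, ?_⟩
  · simpa only [I0, one_mul, one_pow] using h0
  · rw [I1, h1]
    linear_combination -V * ω_pow_three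
  · rw [I2, h2]
    linear_combination -(ω ^ 3 + 1) * V * ω_pow_three
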